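/- arXiv:1311.0173 — 2 statements merged into one kernel-verified Lean document; each statement's English description precedes it below -/
import Mathlib

section
/- For any β ∈ ℕ^n, integer r ≥ 0, and x ∈ Δ_n, the β-th moment of the multinomial distribution satisfies Σ_{α∈I(n,r)} α^β·(r!/α!)·x^α = Σ_{α∈ℕ^n, α≤β} r^{|α|̲}·x^α·Π_{i=1}^n S(β_i, α_i). -/
/-!
Expanding every power as `a ^ b = ∑ k, S(b, k) * a.descFactorial k` turns the `β`-th moment into a
combination of factorial moments `∑ α, ∏ i, (α i).descFactorial (κ i) * (r choose α) * x ^ α`.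
In a factorial moment the falling factorials cancel against `α!`; after the substitution
`α = γ + κ` what remains is `r.descFactorial |κ| * x ^ κ` times the multinomial expansion of
`(∑ i, x i) ^ (r - |κ|)`, which is `1` on the simplex.
-/

/-- Stirling numbers of the second kind. -/
def stirling : ℕ → ℕ → ℕ
  | 0, 0 => 1
  | 0, _ + 1 => 0
  | _ + 1, 0 => 0
  | m + 1, k + 1 => stirling m k + (k + 1) * stirling m (k + 1)

open Finset

theorem stirling_eq_stirlingSecond : stirling = Nat.stirlingSecond := by
  funext m k
  induction m generalizing k with
  | zero => cases k <;> rfl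
  | succ m ih =>
    cases k with
    | zero => rfl
    | succ k => rw [stirling, Nat.stirlingSecond_succ_succ, ih, ih, add_comm]

namespace Nat

theorem mul_descFactorial (m k : ℕ) :
    m * m.descFactorial k = m.descFactorial (k + 1) + k * m.descFactorial k := by
  rcases le_or_gt k m with h | h
  · rw [descFactorial_succ, ← Nat.add_mul, Nat.sub_add_cancel h]
  · simp [descFactorial_eq_zero_iff_lt.2 h]

theorem pow_eq_sum_stirlingSecond_mul_descFactorial (m b : ℕ) :
    m ^ b = ∑ k ∈ range (b + 1), stirlingSecond b k * m.descFactorial k := by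
  induction b with
  | zero => simp
  | succ b ih =>
    have shift : ∑ k ∈ range (b + 1), k * (stirlingSecond b k * m.descFactorial k)
        = ∑ k ∈ range (b + 1), (k + 1) * (stirlingSecond b (k + 1) * m.descFactorial (k + 1)) := by
      calc _ = ∑ k ∈ range (b + 2), k * (stirlingSecond b k * m.descFactorial k) := by
            rw [sum_range_succ _ (b + 1), stirlingSecond_eq_zero_of_lt b.lt_succ_self]; simp
        _ = _ := by rw [sum_range_succ']; simp
    calc m ^ (b + 1)
        = ∑ k ∈ range (b + 1), stirlingSecond b k * (m * m.descFactorial k) := by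
          rw [pow_succ, ih, sum_mul]
          exact sum_congr rfl fun k _ => by ring
      _ = ∑ k ∈ range (b + 1), stirlingSecond b k * m.descFactorial (k + 1)
          + ∑ k ∈ range (b + 1), k * (stirlingSecond b k * m.descFactorial k) := by
          rw [← sum_add_distrib]
          exact sum_congr rfl fun k _ => by rw [mul_descFactorial]; ring
      _ = ∑ k ∈ range (b + 2), stirlingSecond (b + 1) k * m.descFactorial k := by
          rw [shift, ← sum_add_distrib, sum_range_succ' _ (b + 1)]
          simp only [stirlingSecond_succ_succ, stirlingSecond_succ_zero, zero_mul, add_zero]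
          exact sum_congr rfl fun k _ => by ring

theorem prod_pow_eq_sum_prod_stirlingSecond_mul_descFactorial {ι : Type*} [Fintype ι]
    [DecidableEq ι] (α β : ι → ℕ) :
    ∏ i, α i ^ β i = ∑ κ ∈ Fintype.piFinset fun i => range (β i + 1),
      (∏ i, stirlingSecond (β i) (κ i)) * ∏ i, (α i).descFactorial (κ i) := by
  simp_rw [pow_eq_sum_stirlingSecond_mul_descFactorial, prod_univ_sum, prod_mul_distrib]

theorem cast_multinomial {ι K : Type*} [Field K] [CharZero K] (s : Finset ι) (f : ι → ℕ) :
    (multinomial s f : K) = (∑ i ∈ s, f i)! / ∏ i ∈ s, ((f i)! : K) := by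
  rw [eq_div_iff (prod_ne_zero_iff.2 fun i _ => mod_cast (f i).factorial_ne_zero),
    ← multinomial_spec s f]
  push_cast
  ring

theorem prod_descFactorial_ne_zero_iff {ι : Type*} (s : Finset ι) (α k : ι → ℕ) :
    ∏ i ∈ s, (α i).descFactorial (k i) ≠ 0 ↔ ∀ i ∈ s, k i ≤ α i := by
  simp [prod_ne_zero_iff, descFactorial_eq_zero_iff_lt]

theorem prod_descFactorial_mul_multinomial_add {ι : Type*} (s : Finset ι) (γ k : ι → ℕ) :
    (∏ i ∈ s, (γ i + k i).descFactorial (k i)) * multinomial s (γ + k)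
      = (∑ i ∈ s, (γ i + k i)).descFactorial (∑ i ∈ s, k i) * multinomial s γ := by
  refine Nat.eq_of_mul_eq_mul_left (prod_pos (s := s) fun i _ => (γ i).factorial_pos) ?_
  calc (∏ i ∈ s, (γ i)!) * ((∏ i ∈ s, (γ i + k i).descFactorial (k i)) * multinomial s (γ + k))
      = (∏ i ∈ s, (γ i + k i)!) * multinomial s (γ + k) := by
        rw [← mul_assoc, ← prod_mul_distrib]
        congr 1
        refine prod_congr rfl fun i _ => ?_
        simpa using factorial_mul_descFactorial (le_add_left (k i) (γ i))
    _ = (∑ i ∈ s, (γ i + k i))! := multinomial_spec s (γ + k)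
    _ = (∏ i ∈ s, (γ i)!) * ((∑ i ∈ s, (γ i + k i)).descFactorial (∑ i ∈ s, k i)
          * multinomial s γ) := by
        rw [mul_left_comm, multinomial_spec, sum_add_distrib,
          ← factorial_mul_descFactorial (le_add_left _ _), Nat.add_sub_cancel, mul_comm]

end Nat

namespace Finset.Nat

theorem sum_antidiagonalTuple_map_addRight {M : Type*} [AddCommMonoid M] (n m : ℕ)
    (k : Fin n → ℕ) (f : (Fin n → ℕ) → M)
    (hf : ∀ α ∈ antidiagonalTuple n (m + ∑ i, k i), f α ≠ 0 → k ≤ α) :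
    ∑ α ∈ antidiagonalTuple n (m + ∑ i, k i), f α = ∑ γ ∈ antidiagonalTuple n m, f (γ + k) := by
  have hsub : (antidiagonalTuple n m).map (addRightEmbedding k)
      ⊆ antidiagonalTuple n (m + ∑ i, k i) := by
    intro α hα
    obtain ⟨γ, hγ, rfl⟩ := mem_map.1 hα
    rw [mem_antidiagonalTuple] at hγ ⊢
    simp [sum_add_distrib, hγ]
  rw [← sum_subset hsub, sum_map]
  · rfl
  intro α hα hnot
  by_contra hne
  have hkα := hf α hα hne
  refine hnot (mem_map.2 ⟨α - k, ?_, tsub_add_cancel_of_le hkα⟩)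
  rw [mem_antidiagonalTuple] at hα ⊢
  simp [sum_tsub_distrib _ fun i _ => hkα i, hα]

theorem sum_antidiagonalTuple_multinomial_mul_prod_pow {R : Type*} [CommSemiring R]
    (n m : ℕ) (x : Fin n → R) :
    ∑ γ ∈ antidiagonalTuple n m, (Nat.multinomial univ γ : R) * ∏ i, x i ^ γ i = (∑ i, x i) ^ m := by
  rw [sum_pow_eq_sum_piAntidiag, piAntidiag_univ_fin_eq_antidiagonalTuple]

theorem sum_antidiagonalTuple_prod_descFactorial_mul_multinomial {R : Type*} [CommSemiring R]
    (n r : ℕ) (k : Fin n → ℕ) (x : Fin n → R) :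
    ∑ α ∈ antidiagonalTuple n r,
      ((∏ i, (α i).descFactorial (k i)) * Nat.multinomial univ α : ℕ) * ∏ i, x i ^ α i
    = r.descFactorial (∑ i, k i) * (∏ i, x i ^ k i) * (∑ i, x i) ^ (r - ∑ i, k i) := by
  have hsupp : ∀ α ∈ antidiagonalTuple n r,
      ((∏ i, (α i).descFactorial (k i)) * Nat.multinomial univ α : ℕ) * ∏ i, x i ^ α i ≠ 0 →
        k ≤ α := by
    intro α _ hne i
    refine (Nat.prod_descFactorial_ne_zero_iff univ α k).1 ?_ i (mem_univ i)
    intro h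
    simp [h] at hne
  rcases lt_or_ge r (∑ i, k i) with hlt | hle
  · rw [Nat.descFactorial_eq_zero_iff_lt.2 hlt, Nat.cast_zero, zero_mul, zero_mul]
    refine sum_eq_zero fun α hα => not_not.1 fun hne => hlt.not_ge ?_
    rw [← (mem_antidiagonalTuple.1 hα)]
    exact sum_le_sum fun i _ => hsupp α hα hne i
  obtain ⟨m, rfl⟩ := Nat.exists_eq_add_of_le' hle
  rw [sum_antidiagonalTuple_map_addRight n m k _ hsupp, Nat.add_sub_cancel,
    ← sum_antidiagonalTuple_multinomial_mul_prod_pow, mul_sum]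
  refine sum_congr rfl fun γ hγ => ?_
  have hγk : ∑ i, (γ i + k i) = m + ∑ i, k i := by
    rw [sum_add_distrib, mem_antidiagonalTuple.1 hγ]
  simp only [Pi.add_apply, pow_add, prod_mul_distrib]
  rw [Nat.prod_descFactorial_mul_multinomial_add, hγk]
  push_cast
  ring

end Finset.Nat

theorem stmt16 (n r : ℕ) (β : Fin n → ℕ) (x : Fin n → ℝ)
    (hx : x ∈ stdSimplex ℝ (Fin n)) :
    ∑ α ∈ Finset.Nat.antidiagonalTuple n r,
      (∏ i, (α i : ℝ) ^ β i) * ((r.factorial : ℝ) / ∏ i, ((α i).factorial : ℝ)) *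
        ∏ i, x i ^ α i
    = ∑ α ∈ Fintype.piFinset (fun i => Finset.range (β i + 1)),
        (r.descFactorial (∑ i, α i) : ℝ) * (∏ i, x i ^ α i) *
          ∏ i, (stirling (β i) (α i) : ℝ) := by
  calc _ = ∑ α ∈ Nat.antidiagonalTuple n r, ∑ κ ∈ Fintype.piFinset fun i => range (β i + 1),
        (∏ i, (Nat.stirlingSecond (β i) (κ i) : ℝ)) *
          (((∏ i, (α i).descFactorial (κ i)) * Nat.multinomial univ α : ℕ) * ∏ i, x i ^ α i) := by
        refine sum_congr rfl fun α hα => ?_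
        have hpow := congrArg (Nat.cast (R := ℝ))
          (Nat.prod_pow_eq_sum_prod_stirlingSecond_mul_descFactorial α β)
        push_cast at hpow
        rw [← Nat.mem_antidiagonalTuple.1 hα, ← Nat.cast_multinomial, hpow, sum_mul, sum_mul]
        exact sum_congr rfl fun κ _ => by push_cast; ring
    _ = ∑ κ ∈ Fintype.piFinset fun i => range (β i + 1),
          (∏ i, (Nat.stirlingSecond (β i) (κ i) : ℝ)) *
            (r.descFactorial (∑ i, κ i) * (∏ i, x i ^ κ i) * (∑ i, x i) ^ (r - ∑ i, κ i)) := by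
        rw [sum_comm]
        simp_rw [← mul_sum, Nat.sum_antidiagonalTuple_prod_descFactorial_mul_multinomial]
    _ = _ := by
        simp only [hx.2, one_pow, stirling_eq_stirlingSecond]
        exact sum_congr rfl fun κ _ => by ring
end

section
/- For any homogeneous polynomial f = Σ_{β∈I(n,d)} f_β x^β of degree d, integer r ≥ 1, and x ∈ Δ_n, one has B_r(f)(x) − f(x) ≤ (1 − r^{d̲}/r^d)·(max_{β∈I(n,d)} f_β·β!/d! − min_{β∈I(n,d)} f_β·β!/d!). -/
/-- Bernstein approximation of order `r` of `f` on the simplex. -/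
noncomputable def bern {n : ℕ} (r : ℕ) (f : (Fin n → ℝ) → ℝ) (x : Fin n → ℝ) : ℝ :=
  ∑ α ∈ Finset.Nat.antidiagonalTuple n r,
    f (fun i => (α i : ℝ) / r) * ((r.factorial : ℝ) / ∏ i, ((α i).factorial : ℝ)) *
      ∏ i, x i ^ α i

/-!
Write `f = ∑ λ_β w_β x^β` with `w_β = d!/β!`, so that the `λ_β` are the Bernstein coefficients.
On the simplex `∑ w_β x^β = (∑ x_i)^d = 1`, and `B_r((∑ y_i)^d) = (∑ x_i)^r = 1` as well.
Bounding powers by falling factorials, `r^d B_r(x^β) ≥ ∑_α (r!/α!) x^α ∏ (α_i)_{β_i} = r^{d̲} x^β`,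
so `B_r(x^β) - ρ x^β ≥ 0` with `ρ = r^{d̲}/r^d`. Hence
`B_r f - f = ∑ λ_β w_β (B_r(x^β) - ρ x^β) - (1 - ρ) ∑ λ_β w_β x^β ≤ (1 - ρ) (max λ - min λ)`.
-/

open Finset
open scoped Nat

theorem Nat.cast_multinomial_s18 {ι K : Type*} [Field K] [CharZero K] (s : Finset ι) (f : ι → ℕ) :
    (Nat.multinomial s f : K) = (∑ i ∈ s, f i)! / ∏ i ∈ s, ((f i)! : K) := by
  have hne : ∏ i ∈ s, ((f i)! : K) ≠ 0 := prod_ne_zero_iff.mpr fun i _ =>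
    Nat.cast_ne_zero.mpr (Nat.factorial_ne_zero _)
  rw [eq_div_iff hne, mul_comm]
  exact_mod_cast Nat.multinomial_spec s f

theorem Nat.multinomial_add_mul_prod_descFactorial {ι : Type*} (s : Finset ι) (β γ : ι → ℕ) :
    Nat.multinomial s (β + γ) * ∏ i ∈ s, (β i + γ i).descFactorial (β i) =
      (∑ i ∈ s, (β i + γ i)).descFactorial (∑ i ∈ s, β i) * Nat.multinomial s γ := by
  refine Nat.eq_of_mul_eq_mul_left (by positivity : 0 < ∏ i ∈ s, (γ i)!) ?_
  have hfac : (∏ i ∈ s, (γ i)!) * ∏ i ∈ s, (β i + γ i).descFactorial (β i) =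
      ∏ i ∈ s, (β i + γ i)! := by
    rw [← prod_mul_distrib]
    refine prod_congr rfl fun i _ => ?_
    simpa using Nat.factorial_mul_descFactorial (Nat.le_add_right (β i) (γ i))
  calc (∏ i ∈ s, (γ i)!) * (Nat.multinomial s (β + γ) * ∏ i ∈ s, (β i + γ i).descFactorial (β i))
      = (∏ i ∈ s, (β i + γ i)!) * Nat.multinomial s (β + γ) := by rw [← hfac]; ring
    _ = (∑ i ∈ s, (β i + γ i))! := by simpa using Nat.multinomial_spec s (β + γ)
    _ = (∑ i ∈ s, γ i)! * (∑ i ∈ s, (β i + γ i)).descFactorial (∑ i ∈ s, β i) := by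
      rw [← Nat.factorial_mul_descFactorial (sum_le_sum fun i _ => Nat.le_add_right _ _),
        sum_add_distrib, Nat.add_sub_cancel_left]
    _ = _ := by rw [← Nat.multinomial_spec s γ]; ring

theorem sum_pow_eq_sum_antidiagonalTuple {R : Type*} [CommSemiring R] {n : ℕ} (d : ℕ)
    (y : Fin n → R) :
    (∑ i, y i) ^ d =
      ∑ β ∈ Nat.antidiagonalTuple n d, (Nat.multinomial univ β : R) * ∏ i, y i ^ β i := by
  rw [sum_pow_eq_sum_piAntidiag, piAntidiag_univ_fin_eq_antidiagonalTuple]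

theorem prod_descFactorial_eq_zero_of_not_le {n : ℕ} {α β : Fin n → ℕ} (h : ¬β ≤ α) :
    ∏ i, (α i).descFactorial (β i) = 0 := by
  simp only [Pi.le_def, not_forall, not_le] at h
  obtain ⟨i, hi⟩ := h
  exact prod_eq_zero (mem_univ i) (Nat.descFactorial_eq_zero_iff_lt.mpr hi)

theorem sum_multinomial_mul_prod_descFactorial {R : Type*} [CommSemiring R] {n : ℕ} (r : ℕ)
    (x : Fin n → R) (β : Fin n → ℕ) :
    ∑ α ∈ Nat.antidiagonalTuple n r,
        ((Nat.multinomial univ α * ∏ i, (α i).descFactorial (β i) : ℕ) : R) * ∏ i, x i ^ α i =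
      r.descFactorial (∑ i, β i) * (∏ i, x i ^ β i) * (∑ i, x i) ^ (r - ∑ i, β i) := by
  classical
  rcases le_or_gt (∑ i, β i) r with hdr | hrd
  · rw [sum_pow_eq_sum_antidiagonalTuple, mul_sum,
      ← sum_filter_of_ne (p := (β ≤ ·)) fun α _ h => by
        contrapose! h
        simp [prod_descFactorial_eq_zero_of_not_le h]]
    -- the surviving `α ≥ β` are exactly the `β + γ` with `|γ| = r - |β|`
    symm
    refine sum_nbij' (β + ·) (· - β) (fun γ hγ => ?_) (fun α hα => ?_) (fun γ _ => ?_)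
      (fun α hα => ?_) (fun γ hγ => ?_)
    · rw [Nat.mem_antidiagonalTuple] at hγ
      simp [Nat.mem_antidiagonalTuple, sum_add_distrib, hγ, hdr]
    · rw [mem_filter, Nat.mem_antidiagonalTuple] at hα
      rw [Nat.mem_antidiagonalTuple, ← hα.1, Pi.sub_def, sum_tsub_distrib _ fun i _ => hα.2 i]
    · exact add_tsub_cancel_left β γ
    · exact add_tsub_cancel_of_le (mem_filter.mp hα).2
    · rw [Nat.mem_antidiagonalTuple] at hγ
      have hsum : ∑ i, (β i + γ i) = r := by rw [sum_add_distrib, hγ, Nat.add_sub_cancel' hdr]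
      have hcoef := Nat.multinomial_add_mul_prod_descFactorial univ β γ
      rw [hsum] at hcoef
      simp only [Pi.add_apply, hcoef, pow_add, prod_mul_distrib]
      push_cast
      ring
  · rw [Nat.descFactorial_eq_zero_iff_lt.mpr hrd]
    refine (sum_eq_zero fun α hα => ?_).trans (by simp)
    have hnle : ¬β ≤ α := fun hle => by
      rw [Nat.mem_antidiagonalTuple] at hα
      exact (sum_le_sum fun i _ => hle i).not_gt (hα ▸ hrd)
    simp [prod_descFactorial_eq_zero_of_not_le hnle]

theorem bern_eq_sum_multinomial {n : ℕ} (r : ℕ) (f : (Fin n → ℝ) → ℝ) (x : Fin n → ℝ) :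
    bern r f x = ∑ α ∈ Nat.antidiagonalTuple n r,
      f (fun i => (α i : ℝ) / r) * Nat.multinomial univ α * ∏ i, x i ^ α i := by
  refine sum_congr rfl fun α hα => ?_
  rw [Nat.cast_multinomial_s18, Nat.mem_antidiagonalTuple.mp hα]

theorem bern_sum_mul {n : ℕ} (r : ℕ) {ι : Type*} (s : Finset ι) (c : ι → ℝ)
    (g : ι → (Fin n → ℝ) → ℝ) (x : Fin n → ℝ) :
    bern r (fun y => ∑ β ∈ s, c β * g β y) x = ∑ β ∈ s, c β * bern r (g β) x := by
  simp only [bern, sum_mul, mul_sum]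
  rw [sum_comm]
  exact sum_congr rfl fun _ _ => sum_congr rfl fun _ _ => by ring

theorem bern_sum_pow {n r : ℕ} (hr : 0 < r) (d : ℕ) (x : Fin n → ℝ) :
    bern r (fun y => (∑ i, y i) ^ d) x = (∑ i, x i) ^ r := by
  rw [bern_eq_sum_multinomial, sum_pow_eq_sum_antidiagonalTuple]
  refine sum_congr rfl fun α hα => ?_
  rw [← sum_div, ← Nat.cast_sum, Nat.mem_antidiagonalTuple.mp hα, div_self (by positivity),
    one_pow, one_mul]

theorem pow_mul_bern_monomial {n r : ℕ} (hr : 0 < r) (β : Fin n → ℕ) (x : Fin n → ℝ) :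
    (r : ℝ) ^ (∑ i, β i) * bern r (fun y => ∏ i, y i ^ β i) x =
      ∑ α ∈ Nat.antidiagonalTuple n r,
        Nat.multinomial univ α * (∏ i, x i ^ α i) * ∏ i, (α i : ℝ) ^ β i := by
  rw [bern_eq_sum_multinomial, mul_sum]
  refine sum_congr rfl fun α _ => ?_
  simp_rw [div_pow]
  rw [prod_div_distrib, prod_pow_eq_pow_sum]
  field_simp

theorem descFactorial_mul_le_pow_mul_bern_monomial {n r : ℕ} (hr : 0 < r) (β : Fin n → ℕ)
    {x : Fin n → ℝ} (hx : ∀ i, 0 ≤ x i) :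
    r.descFactorial (∑ i, β i) * (∏ i, x i ^ β i) * (∑ i, x i) ^ (r - ∑ i, β i) ≤
      (r : ℝ) ^ (∑ i, β i) * bern r (fun y => ∏ i, y i ^ β i) x := by
  rw [← sum_multinomial_mul_prod_descFactorial, pow_mul_bern_monomial hr]
  refine sum_le_sum fun α _ => ?_
  have hxα : 0 ≤ ∏ i, x i ^ α i := prod_nonneg fun i _ => pow_nonneg (hx i) _
  calc ((Nat.multinomial univ α * ∏ i, (α i).descFactorial (β i) : ℕ) : ℝ) * ∏ i, x i ^ α i
      = Nat.multinomial univ α * (∏ i, x i ^ α i) * ∏ i, ((α i).descFactorial (β i) : ℝ) := by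
        push_cast; ring
    _ ≤ Nat.multinomial univ α * (∏ i, x i ^ α i) * ∏ i, (α i : ℝ) ^ β i := by
      gcongr with i
      exact_mod_cast Nat.descFactorial_le_pow _ _

theorem bern_sub_le_of_forall_mem_Icc {n d r : ℕ} (hr : 0 < r) (c : (Fin n → ℕ) → ℝ)
    {x : Fin n → ℝ} (hx0 : ∀ i, 0 ≤ x i) (hx1 : ∑ i, x i = 1) {m M : ℝ}
    (hc : ∀ β ∈ Nat.antidiagonalTuple n d, c β / Nat.multinomial univ β ∈ Set.Icc m M) :
    bern r (fun y => ∑ β ∈ Nat.antidiagonalTuple n d, c β * ∏ i, y i ^ β i) x -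
        ∑ β ∈ Nat.antidiagonalTuple n d, c β * ∏ i, x i ^ β i ≤
      (1 - r.descFactorial d / (r : ℝ) ^ d) * (M - m) := by
  set S := Nat.antidiagonalTuple n d
  set w : (Fin n → ℕ) → ℝ := fun β => Nat.multinomial univ β
  set ρ : ℝ := r.descFactorial d / (r : ℝ) ^ d
  set P : (Fin n → ℕ) → ℝ := fun β => ∏ i, x i ^ β i
  set B : (Fin n → ℕ) → ℝ := fun β => bern r (fun y => ∏ i, y i ^ β i) x
  have hw : ∀ β, 0 < w β := fun β => Nat.cast_pos.mpr (Nat.multinomial_pos _ _)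
  have hρ : ρ ≤ 1 :=
    div_le_one_of_le₀ (by exact_mod_cast Nat.descFactorial_le_pow r d) (by positivity)
  have hP : ∑ β ∈ S, w β * P β = 1 := by
    rw [← sum_pow_eq_sum_antidiagonalTuple, hx1, one_pow]
  have hB : ∑ β ∈ S, w β * B β = 1 := by
    simp only [w, B, S, ← bern_sum_mul, ← sum_pow_eq_sum_antidiagonalTuple, bern_sum_pow hr,
      hx1, one_pow]
  have hgap : ∀ β ∈ S, ρ * P β ≤ B β := fun β hβ => by
    have h := descFactorial_mul_le_pow_mul_bern_monomial hr β hx0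
    rw [Nat.mem_antidiagonalTuple.mp hβ, hx1, one_pow, mul_one] at h
    rw [div_mul_eq_mul_div, div_le_iff₀ (by positivity)]
    linarith
  calc bern r (fun y => ∑ β ∈ S, c β * ∏ i, y i ^ β i) x - ∑ β ∈ S, c β * P β
      = ∑ β ∈ S, c β / w β * (w β * (B β - ρ * P β)) -
          (1 - ρ) * ∑ β ∈ S, c β / w β * (w β * P β) := by
        rw [bern_sum_mul, mul_sum, ← sum_sub_distrib, ← sum_sub_distrib]
        refine sum_congr rfl fun β _ => ?_
        field_simp [(hw β).ne']
        ring
    _ ≤ ∑ β ∈ S, M * (w β * (B β - ρ * P β)) - (1 - ρ) * ∑ β ∈ S, m * (w β * P β) := by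
        gcongr with β hβ β hβ
        · exact mul_nonneg (hw β).le (sub_nonneg.mpr (hgap β hβ))
        · exact (hc β hβ).2
        · exact mul_nonneg (hw β).le (prod_nonneg fun i _ => pow_nonneg (hx0 i) _)
        · exact (hc β hβ).1
    _ = (1 - ρ) * (M - m) := by
        simp_rw [← mul_sum, mul_sub, sum_sub_distrib, mul_left_comm _ ρ, ← mul_sum, hP, hB]
        ring

theorem stmt18 (n d r : ℕ) (hr : 1 ≤ r) (c : (Fin n → ℕ) → ℝ) (x : Fin n → ℝ)
    (hx : x ∈ stdSimplex ℝ (Fin n)) :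
    bern r (fun y => ∑ β ∈ Finset.Nat.antidiagonalTuple n d, c β * ∏ i, y i ^ β i) x -
        (∑ β ∈ Finset.Nat.antidiagonalTuple n d, c β * ∏ i, x i ^ β i)
      ≤ (1 - (r.descFactorial d : ℝ) / (r : ℝ) ^ d) *
        (sSup ((fun β => c β * (∏ i, ((β i).factorial : ℝ)) / (d.factorial : ℝ)) ''
            (Finset.Nat.antidiagonalTuple n d : Set (Fin n → ℕ))) -
         sInf ((fun β => c β * (∏ i, ((β i).factorial : ℝ)) / (d.factorial : ℝ)) ''
            (Finset.Nat.antidiagonalTuple n d : Set (Fin n → ℕ)))) := by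
  obtain ⟨hx0, hx1⟩ := hx
  set g : (Fin n → ℕ) → ℝ := fun β => c β * (∏ i, ((β i)! : ℝ)) / (d ! : ℝ)
  have hg := (Nat.antidiagonalTuple n d).finite_toSet.image g
  refine bern_sub_le_of_forall_mem_Icc hr c hx0 hx1 fun β hβ => ?_
  have hmem : g β ∈ g '' (Nat.antidiagonalTuple n d : Set (Fin n → ℕ)) :=
    Set.mem_image_of_mem g hβ
  rw [Nat.cast_multinomial_s18, Nat.mem_antidiagonalTuple.mp hβ, div_div_eq_mul_div]
  exact ⟨csInf_le hg.bddBelow hmem, le_csSup hg.bddAbove hmem⟩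
end
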